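/- The embedding e intertwines translation on ℝⁿ with σ: for all x, y ∈ ℝⁿ one has σ(x, e(y)) = e(x + y). Consequently the orbit {σ(x, q(ι(0), 0)) : x ∈ ℝⁿ} of the base point q(ι(0), 0) equals the image of e and is dense in K, so (ℝⁿ, K, σ; q(ι(0), 0)) is an ambit. -/

import Mathlib

open Set

noncomputable section

/-- `A₀(i)`: the set of coordinates where `i` equals `1`. -/
def Aset (n : ℕ) (i : Fin n → unitInterval) : Set (Fin n) := {k | (i k : ℝ) = 1}

/-- `B₀(i)`: the set of coordinates where `i` equals `0`. -/
def Bset (n : ℕ) (i : Fin n → unitInterval) : Set (Fin n) := {k | (i k : ℝ) = 0}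

open Classical in
/-- `ψ_A(i)`: replace `i k` by `1 - i k` for every `k ∈ A`. -/
def psiFlip (n : ℕ) (A : Set (Fin n)) (i : Fin n → unitInterval) : Fin n → unitInterval :=
  fun k => if k ∈ A then unitInterval.symm (i k) else i k

open Classical in
/-- `1_S`: the indicator vector of `S` in `ℤⁿ`. -/
def indVec (n : ℕ) (S : Set (Fin n)) : Fin n → ℤ := fun k => if k ∈ S then 1 else 0
/-- `h_N`: the Stone–Čech extension of translation by `N` on `ℤⁿ`. -/
def hshift (n : ℕ) (N : Fin n → ℤ) : StoneCech (Fin n → ℤ) → StoneCech (Fin n → ℤ) :=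
  stoneCechExtend (g := fun z : Fin n → ℤ => stoneCechUnit (z + N))
    (continuous_stoneCechUnit.comp continuous_of_discreteTopology)

/-- The relation `h` on `βℤⁿ × Iⁿ`. -/
def hrel (n : ℕ) (x y : StoneCech (Fin n → ℤ) × (Fin n → unitInterval)) : Prop :=
  ∃ A B : Set (Fin n), A ⊆ Aset n x.2 ∧ B ⊆ Bset n x.2 ∧
    y.1 = hshift n (indVec n A - indVec n B) x.1 ∧ y.2 = psiFlip n (A ∪ B) x.2

/-- `K = (βℤⁿ × Iⁿ)/h`, with the quotient topology. -/
abbrev Kspace (n : ℕ) := Quot (hrel n)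

/-- The quotient map `q : βℤⁿ × Iⁿ → K`. -/
abbrev qmap (n : ℕ) : StoneCech (Fin n → ℤ) × (Fin n → unitInterval) → Kspace n :=
  Quot.mk (hrel n)
/-- Coordinatewise floor `⌊x⌋ ∈ ℤⁿ`. -/
def floorVec (n : ℕ) (x : Fin n → ℝ) : Fin n → ℤ := fun k => ⌊x k⌋

/-- Coordinatewise fractional part `{x} ∈ [0,1)ⁿ ⊆ Iⁿ`. -/
def fracVec (n : ℕ) (x : Fin n → ℝ) : Fin n → unitInterval :=
  fun k => ⟨Int.fract (x k), ⟨Int.fract_nonneg _, (Int.fract_lt_one _).le⟩⟩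

/-- The map `e : ℝⁿ → K`, `e x = q(ι ⌊x⌋, {x})`. -/
def embMap (n : ℕ) (x : Fin n → ℝ) : Kspace n :=
  qmap n (stoneCechUnit (floorVec n x), fracVec n x)
open Classical in
/-- `N ∈ {0,1}ⁿ` with `N_k = 1` iff `i_k + j_k ≥ 1`. -/
def Nvec (n : ℕ) (i : Fin n → unitInterval) (j : Fin n → ℝ) : Fin n → ℤ :=
  fun k => if 1 ≤ (i k : ℝ) + j k then 1 else 0
/-- `σ` satisfies the defining formula `σ(x, ·) = Λ₁(⌊x⌋) ∘ Λ₂({x})`, written out on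
representatives: `σ(x, q(p, i)) = q(h_{⌊x⌋ + N}(p), i + {x} − N)` where `N_k = 1` iff
`i_k + {x}_k ≥ 1`. -/
def sigmaSpec (n : ℕ) (σ : (Fin n → ℝ) → Kspace n → Kspace n) : Prop :=
  ∀ (x : Fin n → ℝ) (p : StoneCech (Fin n → ℤ)) (i i' : Fin n → unitInterval),
    (∀ k, (i' k : ℝ) =
      (i k : ℝ) + Int.fract (x k) - (Nvec n i (fun k => Int.fract (x k)) k : ℝ)) →
    σ x (qmap n (p, i)) =
      qmap n (hshift n (floorVec n x + Nvec n i (fun k => Int.fract (x k))) p, i')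


lemma hshift_unit (n : ℕ) (N z : Fin n → ℤ) :
    hshift n N (stoneCechUnit z) = stoneCechUnit (z + N) :=
  congrFun (stoneCechExtend_extends _) z

lemma frac_add' (a b : ℝ) :
    Int.fract (a + b) = Int.fract b + Int.fract a -
      (if 1 ≤ Int.fract b + Int.fract a then (1:ℝ) else 0) ∧
    ⌊a + b⌋ = ⌊b⌋ + (⌊a⌋ + (if 1 ≤ Int.fract b + Int.fract a then (1:ℤ) else 0)) := by
  have ha := Int.fract_nonneg a
  have hb := Int.fract_nonneg b
  have ha1 := Int.fract_lt_one a
  have hb1 := Int.fract_lt_one b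
  have hab : a + b = ((⌊b⌋ + ⌊a⌋ : ℤ) : ℝ) + (Int.fract b + Int.fract a) := by
    push_cast; rw [Int.fract, Int.fract]; ring
  have hfl : ⌊Int.fract b + Int.fract a⌋ =
      (if 1 ≤ Int.fract b + Int.fract a then (1:ℤ) else 0) := by
    split_ifs with h
    · exact Int.floor_eq_iff.mpr ⟨by exact_mod_cast h, by push_cast; linarith⟩
    · exact Int.floor_eq_iff.mpr ⟨by norm_num; linarith, by push_cast; linarith⟩
  constructor
  · rw [hab, Int.fract_intCast_add, Int.fract, hfl]
    split_ifs <;> push_cast <;> ring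
  · rw [hab, Int.floor_intCast_add, hfl]; ring

lemma denseRange_frac1 : DenseRange (fun r : ℝ =>
    (⟨Int.fract r, ⟨Int.fract_nonneg _, (Int.fract_lt_one _).le⟩⟩ : unitInterval)) := by
  intro t
  rw [closure_subtype]
  have : Subtype.val '' (Set.range (fun r : ℝ =>
      (⟨Int.fract r, ⟨Int.fract_nonneg _, (Int.fract_lt_one _).le⟩⟩ : unitInterval)))
      = Set.Ico (0:ℝ) 1 := by
    ext u
    constructor
    · rintro ⟨v, ⟨r, rfl⟩, rfl⟩
      exact ⟨Int.fract_nonneg _, Int.fract_lt_one _⟩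
    · rintro ⟨h0, h1⟩
      exact ⟨⟨u, ⟨h0, h1.le⟩⟩, ⟨u, by simp [Int.fract_eq_self.mpr ⟨h0, h1⟩]⟩, rfl⟩
  rw [this, closure_Ico (by norm_num : (0:ℝ) ≠ 1)]
  exact ⟨t.2.1, t.2.2⟩

theorem statement8 (n : ℕ) (hn : 1 ≤ n)
    (σ : (Fin n → ℝ) → Kspace n → Kspace n) (hσ : sigmaSpec n σ) :
    (∀ x y : Fin n → ℝ, σ x (embMap n y) = embMap n (x + y)) ∧
    ({w | ∃ x : Fin n → ℝ,
        σ x (qmap n (stoneCechUnit (0 : Fin n → ℤ), (0 : Fin n → unitInterval))) = w} =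
      Set.range (embMap n)) ∧
    Dense {w | ∃ x : Fin n → ℝ,
        σ x (qmap n (stoneCechUnit (0 : Fin n → ℤ), (0 : Fin n → unitInterval))) = w} := by

  have key : ∀ x y : Fin n → ℝ, σ x (embMap n y) = embMap n (x + y) := by
    intro x y
    have hi' : ∀ k, ((fracVec n (x + y) k : ℝ)) = (fracVec n y k : ℝ) + Int.fract (x k)
        - (Nvec n (fracVec n y) (fun k => Int.fract (x k)) k : ℝ) := by
      intro k
      have h := (frac_add' (x k) (y k)).1
      simp only [fracVec, Nvec, Pi.add_apply]
      by_cases hc : 1 ≤ Int.fract (y k) + Int.fract (x k)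
      · simp only [hc, if_true] at h ⊢
        push_cast
        exact h
      · simp only [hc, if_false] at h ⊢
        push_cast
        simpa using h
    have h1 := hσ x (stoneCechUnit (floorVec n y)) (fracVec n y) (fracVec n (x + y)) hi'
    have h2 : σ x (embMap n y) = qmap n
        (hshift n (floorVec n x + Nvec n (fracVec n y) (fun k => Int.fract (x k)))
          (stoneCechUnit (floorVec n y)), fracVec n (x + y)) := h1
    rw [h2, hshift_unit]
    have hz : floorVec n y + (floorVec n x + Nvec n (fracVec n y) (fun k => Int.fract (x k)))
        = floorVec n (x + y) := by
      funext k
      have h := (frac_add' (x k) (y k)).2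
      simp only [floorVec, Nvec, fracVec, Pi.add_apply]
      by_cases hc : 1 ≤ Int.fract (y k) + Int.fract (x k)
      · simp only [hc, if_true] at h ⊢
        omega
      · simp only [hc, if_false] at h ⊢
        omega
    rw [hz]
    rfl
  have hbase : (qmap n (stoneCechUnit (0 : Fin n → ℤ), (0 : Fin n → unitInterval)))
      = embMap n 0 := by
    have hf : floorVec n 0 = 0 := by funext k; simp [floorVec]
    have hg : fracVec n 0 = 0 := by
      funext k; apply Subtype.ext; simp [fracVec]
    simp only [embMap, hf, hg]
  have horbit : {w | ∃ x : Fin n → ℝ,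
      σ x (qmap n (stoneCechUnit (0 : Fin n → ℤ), (0 : Fin n → unitInterval))) = w} =
      Set.range (embMap n) := by
    ext w
    simp only [Set.mem_setOf_eq, Set.mem_range]
    constructor
    · rintro ⟨x, rfl⟩
      exact ⟨x, by rw [hbase, key, add_zero]⟩
    · rintro ⟨x, rfl⟩
      exact ⟨x, by rw [hbase, key, add_zero]⟩
  refine ⟨key, horbit, ?_⟩
  rw [horbit]
  -- Dense (range embMap)
  have hgd : Dense (Set.range (fun x : Fin n → ℝ =>
      ((stoneCechUnit (floorVec n x), fracVec n x) :
        StoneCech (Fin n → ℤ) × (Fin n → unitInterval)))) := by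
    have hrange : Set.range (fun x : Fin n → ℝ =>
        ((stoneCechUnit (floorVec n x), fracVec n x) :
          StoneCech (Fin n → ℤ) × (Fin n → unitInterval))) =
        (Set.range (stoneCechUnit : (Fin n → ℤ) → _)) ×ˢ
          (Set.univ.pi fun _ : Fin n => Set.range (fun r : ℝ =>
            (⟨Int.fract r, ⟨Int.fract_nonneg _, (Int.fract_lt_one _).le⟩⟩ : unitInterval))) := by
      ext ⟨p, i⟩
      simp only [Set.mem_range, Set.mem_prod, Set.mem_pi, Set.mem_univ, forall_true_left,
        Prod.mk.injEq]
      constructor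
      · rintro ⟨x, hx1, hx2⟩
        exact ⟨⟨floorVec n x, hx1⟩, fun k => ⟨x k, congrFun hx2 k⟩⟩
      · rintro ⟨⟨z, hz⟩, hi⟩
        refine ⟨fun k => (z k : ℝ) + (i k : ℝ), ?_, ?_⟩
        · rw [← hz]
          congr 1
          funext k
          have h0 := (i k).2.1
          have h1 : (i k : ℝ) < 1 := by
            obtain ⟨r, hr⟩ := hi k
            have := Int.fract_lt_one r
            rw [← congrArg Subtype.val hr] at *
            simpa using this
          simp only [floorVec]
          rw [Int.floor_intCast_add, Int.floor_eq_zero_iff.mpr ⟨h0, h1⟩, add_zero]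
        · funext k
          apply Subtype.ext
          have h0 := (i k).2.1
          have h1 : (i k : ℝ) < 1 := by
            obtain ⟨r, hr⟩ := hi k
            have := Int.fract_lt_one r
            rw [← congrArg Subtype.val hr] at *
            simpa using this
          simp only [fracVec]
          rw [Int.fract_intCast_add, Int.fract_eq_self.mpr ⟨h0, h1⟩]
    rw [hrange]
    exact (denseRange_stoneCechUnit).prod
      (dense_pi Set.univ fun k _ => denseRange_frac1)
  have hq : Function.Surjective (qmap n) := Quot.exists_rep
  have : Set.range (embMap n) = qmap n '' (Set.range (fun x : Fin n → ℝ =>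
      ((stoneCechUnit (floorVec n x), fracVec n x) :
        StoneCech (Fin n → ℤ) × (Fin n → unitInterval)))) := by
    rw [← Set.range_comp]
    rfl
  rw [this]
  exact hq.denseRange.dense_image continuous_quot_mk hgd
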